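/- The binary-reversal function f(Σ_{i=0}^{n} a_i 2^i) = Σ_{i=0}^{n} a_{n-i} 2^i (where a_n = 1 is the leading bit) does not extend to a continuous map of [-1,1]² fixing the Cantor encoding: the encoded points κ(2^n) and κ(2^n + 2^{n-1}) converge to a common limit as n → ∞, yet f(2^n) = 1 and f(2^n + 2^{n-1}) = 3 for all n ≥ 1. Hence there is no continuous function F on the closure of κ(ℕ) with F ∘ κ = κ ∘ f. -/

import Mathlib

noncomputable def kappaNat (n : ℕ) : ℝ :=
  (2 / 3) * ∑ i ∈ Finset.range (Nat.digits 2 n).length,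
    (if (Nat.digits 2 n).getD i 0 = 1 then (1 : ℝ) else -1) / 3 ^ i

/-- Reversal of the binary digits of a natural number. -/
def binRev (n : ℕ) : ℕ := Nat.ofDigits 2 (Nat.digits 2 n).reverse

lemma digits_pow (n : ℕ) : Nat.digits 2 (2^n) = List.replicate n 0 ++ [1] := by
  induction n with
  | zero => simp
  | succ m ih =>
    rw [Nat.digits_def' (by norm_num) (by positivity)]
    have h1 : 2^(m+1) % 2 = 0 := by simp [pow_succ]
    have h2 : 2^(m+1) / 2 = 2^m := by rw [pow_succ]; exact Nat.mul_div_cancel _ (by norm_num)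
    rw [h1, h2, ih, List.replicate_succ]; rfl

lemma digits_3pow (m : ℕ) : Nat.digits 2 (3*2^m) = List.replicate m 0 ++ [1,1] := by
  induction m with
  | zero => simp [Nat.digits_def' (b:=2) (by norm_num) (n:=3) (by norm_num)]
  | succ m ih =>
    rw [Nat.digits_def' (by norm_num) (by positivity)]
    have h1 : 3*2^(m+1) % 2 = 0 := by simp [pow_succ, ← mul_assoc]
    have h2 : 3*2^(m+1) / 2 = 3*2^m := by
      rw [pow_succ, ← mul_assoc]; exact Nat.mul_div_cancel _ (by norm_num)
    rw [h1, h2, ih, List.replicate_succ]; rfl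

lemma kappa_pow (n : ℕ) :
    kappaNat (2^n) = (2/3) * (-(∑ i ∈ Finset.range n, (1/3:ℝ)^i) + (1/3)^n) := by
  rw [kappaNat, digits_pow]
  have hlen : (List.replicate n (0:ℕ) ++ [1]).length = n+1 := by simp
  rw [hlen, Finset.sum_range_succ]
  have h1 : (List.replicate n (0:ℕ) ++ [1]).getD n 0 = 1 := by
    rw [List.getD_append_right _ _ _ _ (by simp)]; simp
  rw [h1, ← Finset.sum_neg_distrib]
  congr 1
  congr 1
  · apply Finset.sum_congr rfl
    intro i hi
    have : (List.replicate n (0:ℕ) ++ [1]).getD i 0 = 0 := by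
      rw [List.getD_append _ _ _ _ (by simpa using Finset.mem_range.mp hi)]; simp [List.getD]
    rw [this]
    simp [div_pow, neg_div]
  · simp [div_pow]

lemma kappa_3pow (m : ℕ) :
    kappaNat (3*2^m)
      = (2/3) * (-(∑ i ∈ Finset.range m, (1/3:ℝ)^i) + ((1/3)^m + (1/3)^(m+1))) := by
  rw [kappaNat, digits_3pow]
  have hlen : (List.replicate m (0:ℕ) ++ [1,1]).length = m+2 := by simp
  rw [hlen, show m+2 = (m+1)+1 from rfl, Finset.sum_range_succ, Finset.sum_range_succ]
  have h1 : (List.replicate m (0:ℕ) ++ [1,1]).getD m 0 = 1 := by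
    rw [List.getD_append_right _ _ _ _ (by simp)]; simp
  have h2 : (List.replicate m (0:ℕ) ++ [1,1]).getD (m+1) 0 = 1 := by
    rw [List.getD_append_right _ _ _ _ (by simp)]; simp
  rw [h1, h2, ← Finset.sum_neg_distrib]
  have hs : ∀ i ∈ Finset.range m,
      (if (List.replicate m (0:ℕ) ++ [1,1]).getD i 0 = 1 then (1:ℝ) else -1) / 3 ^ i
        = -(1/3:ℝ)^i := by
    intro i hi
    have : (List.replicate m (0:ℕ) ++ [1,1]).getD i 0 = 0 := by
      rw [List.getD_append _ _ _ _ (by simpa using Finset.mem_range.mp hi)]; simp [List.getD]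
    rw [this]; simp [div_pow, neg_div]
  rw [Finset.sum_congr rfl hs]
  congr 1
  rw [add_assoc]
  congr 1
  simp [div_pow]

lemma ofDigits_replicate_zero (n : ℕ) : Nat.ofDigits 2 (List.replicate n 0) = 0 := by
  induction n with
  | zero => rfl
  | succ m ih => simp [List.replicate_succ, Nat.ofDigits_cons, ih]

lemma binRev_pow (n : ℕ) : binRev (2^n) = 1 := by
  rw [binRev, digits_pow]
  simp [Nat.ofDigits_cons, ofDigits_replicate_zero]

lemma binRev_3pow (m : ℕ) : binRev (3*2^m) = 3 := by
  rw [binRev, digits_3pow]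
  simp [Nat.ofDigits_cons, ofDigits_replicate_zero]

lemma three_mul_pow (n : ℕ) (hn : 1 ≤ n) : 2^n + 2^(n-1) = 3 * 2^(n-1) := by
  obtain ⟨m, rfl⟩ := Nat.exists_eq_add_of_le hn
  simp [pow_succ, Nat.add_sub_cancel_left]
  ring

lemma tendsto_geom : Filter.Tendsto (fun n => ∑ i ∈ Finset.range n, (1/3:ℝ)^i)
    Filter.atTop (nhds (3/2)) := by
  have h := (hasSum_geometric_of_lt_one (r := (1/3:ℝ)) (by norm_num) (by norm_num)).tendsto_sum_nat
  convert h using 2; norm_num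

lemma tendsto_pow3 : Filter.Tendsto (fun n : ℕ => (1/3:ℝ)^n) Filter.atTop (nhds 0) :=
  tendsto_pow_atTop_nhds_zero_of_lt_one (by norm_num) (by norm_num)

lemma tendsto_kappa_pow :
    Filter.Tendsto (fun n : ℕ => kappaNat (2 ^ n)) Filter.atTop (nhds (-1)) := by
  have h : Filter.Tendsto
      (fun n : ℕ => (2/3) * (-(∑ i ∈ Finset.range n, (1/3:ℝ)^i) + (1/3)^n))
      Filter.atTop (nhds ((2/3) * (-(3/2) + 0))) :=
    (tendsto_geom.neg.add tendsto_pow3).const_mul _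
  have : ((2:ℝ)/3) * (-(3/2) + 0) = -1 := by norm_num
  rw [this] at h
  exact h.congr (fun n => (kappa_pow n).symm)

lemma tendsto_kappa_3pow :
    Filter.Tendsto (fun n : ℕ => kappaNat (2 ^ n + 2 ^ (n - 1)))
      Filter.atTop (nhds (-1)) := by
  have hg : Filter.Tendsto
      (fun m : ℕ => (2/3) * (-(∑ i ∈ Finset.range m, (1/3:ℝ)^i) + ((1/3)^m + (1/3)^(m+1))))
      Filter.atTop (nhds ((2/3) * (-(3/2) + (0 + 0)))) := by
    refine Filter.Tendsto.const_mul _ (tendsto_geom.neg.add (tendsto_pow3.add ?_))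
    have := tendsto_pow3.comp (Filter.tendsto_add_atTop_nat 1)
    simpa [Function.comp_def] using this
  have hval : ((2:ℝ)/3) * (-(3/2) + (0 + 0)) = -1 := by norm_num
  rw [hval] at hg
  have hcomp := hg.comp (Filter.tendsto_sub_atTop_nat 1)
  refine hcomp.congr' ?_
  filter_upwards [Filter.eventually_ge_atTop 1] with n hn
  rw [Function.comp_apply, ← kappa_3pow, ← three_mul_pow n hn]

/-- κ(2^n) and κ(2^n + 2^{n-1}) converge to a common limit,
yet binRev(2^n) = 1 and binRev(2^n + 2^{n-1}) = 3 for all n ≥ 1; hence no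
continuous F on the closure of κ(ℕ) satisfies F ∘ κ = κ ∘ binRev. -/
theorem binRev_no_continuous_extension :
    (∃ L : ℝ, Filter.Tendsto (fun n : ℕ => kappaNat (2 ^ n))
        Filter.atTop (nhds L) ∧
      Filter.Tendsto (fun n : ℕ => kappaNat (2 ^ n + 2 ^ (n - 1)))
        Filter.atTop (nhds L)) ∧
    (∀ n : ℕ, 1 ≤ n → binRev (2 ^ n) = 1 ∧ binRev (2 ^ n + 2 ^ (n - 1)) = 3) ∧
    ¬ ∃ F : ℝ → ℝ, ContinuousOn F (closure (Set.range kappaNat)) ∧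
      ∀ n : ℕ, F (kappaNat n) = kappaNat (binRev n) := by
  refine ⟨⟨-1, tendsto_kappa_pow, tendsto_kappa_3pow⟩, ?_, ?_⟩
  · intro n hn
    refine ⟨binRev_pow n, ?_⟩
    rw [three_mul_pow n hn, binRev_3pow]
  · rintro ⟨F, hF, hFk⟩
    have hmem : ∀ n : ℕ, kappaNat n ∈ closure (Set.range kappaNat) :=
      fun n => subset_closure (Set.mem_range_self n)
    have hL : (-1 : ℝ) ∈ closure (Set.range kappaNat) := by
      have hcl : IsClosed (closure (Set.range kappaNat)) := isClosed_closure
      exact hcl.mem_of_tendsto tendsto_kappa_pow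
        (Filter.Eventually.of_forall (fun n => hmem _))
    have hcw := (hF (-1) hL).tendsto
    -- F along κ(2^n)
    have h1 : Filter.Tendsto (fun n : ℕ => F (kappaNat (2 ^ n))) Filter.atTop
        (nhds (F (-1))) := by
      refine hcw.comp ?_
      rw [tendsto_nhdsWithin_iff]
      exact ⟨tendsto_kappa_pow, Filter.Eventually.of_forall (fun n => hmem _)⟩
    have h2 : Filter.Tendsto (fun n : ℕ => F (kappaNat (2 ^ n + 2 ^ (n - 1)))) Filter.atTop
        (nhds (F (-1))) := by
      refine hcw.comp ?_
      rw [tendsto_nhdsWithin_iff]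
      exact ⟨tendsto_kappa_3pow, Filter.Eventually.of_forall (fun n => hmem _)⟩
    have e1 : F (-1) = kappaNat 1 := by
      have : Filter.Tendsto (fun _ : ℕ => kappaNat 1) Filter.atTop (nhds (F (-1))) := by
        refine h1.congr (fun n => ?_)
        rw [hFk, binRev_pow]
      exact tendsto_nhds_unique this tendsto_const_nhds
    have e3 : F (-1) = kappaNat 3 := by
      have : Filter.Tendsto (fun _ : ℕ => kappaNat 3) Filter.atTop (nhds (F (-1))) := by
        refine h2.congr' ?_
        filter_upwards [Filter.eventually_ge_atTop 1] with n hn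
        rw [hFk, three_mul_pow n hn, binRev_3pow]
      exact tendsto_nhds_unique this tendsto_const_nhds
    have hk1 : kappaNat 1 = 2/3 := by norm_num [kappaNat]
    have hk3 : kappaNat 3 = 8/9 := by
      have h3 : Nat.digits 2 3 = [1,1] := by simpa using digits_3pow 0
      norm_num [kappaNat, h3, Finset.sum_range_succ]
    rw [e1, hk1] at e3
    rw [hk3] at e3
    norm_num at e3
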